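/- arXiv:2410.14311 — 8 statements merged into one kernel-verified Lean document; each statement's English description precedes it below -/
import Mathlib

section
/- Let G be a finite two-player normal-form game and fix a pure strategy s1 of player 1. Then the set fbr⁻¹(s1) of mixed strategies σ2 of player 2 for which s1 is a favourable best response (i.e. s1 is a best response to σ2 and among all pure best responses to σ2 it maximizes player 2's expected utility u2(·, σ2)) is convex. -/
open Finset

noncomputable section

variable {S1 S2 : Type*} [Fintype S1] [Fintype S2]

/-- Player 1's expected utility of pure strategy `s1` against a mixed strategy `σ2`. -/
def pay (u : S1 → S2 → ℝ) (s1 : S1) (σ2 : S2 → ℝ) : ℝ :=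
  ∑ s2, σ2 s2 * u s1 s2

lemma pay_combo (u : S1 → S2 → ℝ) (t : S1) (x y : S2 → ℝ) (a b : ℝ) :
    pay u t (a • x + b • y) = a * pay u t x + b * pay u t y := by
  simp only [pay, Finset.mul_sum]
  rw [← Finset.sum_add_distrib]
  refine Finset.sum_congr rfl fun s _ => ?_
  simp [Pi.add_apply, Pi.smul_apply, smul_eq_mul]
  ring

/-- The set of mixed strategies of player 2 to which `s1` is a favourable best response:
    `s1` is a best response (for u1) and, among all pure best responses, it maximizes
    player 2's expected utility u2. -/
def fbrInv (u1 u2 : S1 → S2 → ℝ) (s1 : S1) : Set (S2 → ℝ) :=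
  {σ2 | σ2 ∈ stdSimplex ℝ S2 ∧
    (∀ t1, pay u1 t1 σ2 ≤ pay u1 s1 σ2) ∧
    (∀ t1, (∀ r1, pay u1 r1 σ2 ≤ pay u1 t1 σ2) → pay u2 t1 σ2 ≤ pay u2 s1 σ2)}

/-- The preimage fbr⁻¹(s1) of a favourable best response is convex. -/
theorem fbrInv_convex (u1 u2 : S1 → S2 → ℝ) (s1 : S1) :
    Convex ℝ (fbrInv u1 u2 s1) := by
  rintro x ⟨hxs, hx1, hx2⟩ y ⟨hys, hy1, hy2⟩ a b ha hb hab
  rcases eq_or_lt_of_le ha with rfl | ha'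
  · have hb1 : b = 1 := by linarith
    subst hb1
    simpa using ⟨hys, hy1, hy2⟩
  rcases eq_or_lt_of_le hb with rfl | hb'
  · have ha1 : a = 1 := by linarith
    subst ha1
    simpa using ⟨hxs, hx1, hx2⟩
  refine ⟨(convex_stdSimplex ℝ S2) hxs hys ha hb hab, ?_, ?_⟩
  · intro t1
    rw [pay_combo, pay_combo]
    have := hx1 t1; have := hy1 t1
    nlinarith
  · intro t1 ht1
    -- t1 is a best response to the combination, hence to both x and y
    have hbx : ∀ r1, pay u1 r1 x ≤ pay u1 t1 x := by
      intro r1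
      by_contra h
      push_neg at h
      have h1 := ht1 s1
      rw [pay_combo, pay_combo] at h1
      have h2 : pay u1 t1 x < pay u1 s1 x := lt_of_lt_of_le h (hx1 r1)
      have h3 := hy1 t1
      nlinarith
    have hby : ∀ r1, pay u1 r1 y ≤ pay u1 t1 y := by
      intro r1
      by_contra h
      push_neg at h
      have h1 := ht1 s1
      rw [pay_combo, pay_combo] at h1
      have h2 : pay u1 t1 y < pay u1 s1 y := lt_of_lt_of_le h (hy1 r1)
      have h3 := hx1 t1
      nlinarith
    have := hx2 t1 hbx
    have := hy2 t1 hby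
    rw [pay_combo, pay_combo]
    nlinarith
end
end

section
/- Every Nash equilibrium of the base game G, viewed as a strategy profile of the mixed-strategy simulation game G_msim (where player 2's mixed strategy σ2 is identified with the pure meta-strategy placing all mass on σ2, and player 1 does not simulate), is a Nash equilibrium of G_msim. That is, NE(G) ⊆ NE(G_msim) for every finite two-player game G and every simulation cost c > 0. -/
open Finset

noncomputable section

variable {S1 S2 : Type*} [Fintype S1] [Fintype S2]

/-- Player 1's payoff in the mixed-strategy simulation game: a pure strategy of
    player 1 is either a base-game strategy (`some s1`) or the simulation action
    `msim` (`none`), which best-responds to the revealed mixed strategy at cost `c`. -/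
def metaU1 [Nonempty S1] (u1 : S1 → S2 → ℝ) (c : ℝ)
    (m1 : Option S1) (σ2 : S2 → ℝ) : ℝ :=
  match m1 with
  | some s1 => pay u1 s1 σ2
  | none => (Finset.univ.sup' Finset.univ_nonempty fun s1 => pay u1 s1 σ2) - c

/-- Every Nash equilibrium of the base game, viewed as a profile of the
    mixed-strategy simulation game (player 2 playing the pure meta-strategy on σ2,
    player 1 never simulating), is a Nash equilibrium of the simulation game:
    player 1 has no profitable (mixed) deviation over `S1 ∪ {msim}`, and player 2
    has no profitable deviation to any finite mixture of mixed strategies. -/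
theorem NE_of_base_is_NE_of_msim [Nonempty S1]
    (u1 u2 : S1 → S2 → ℝ) (c : ℝ) (hc : 0 < c)
    (fbr : (S2 → ℝ) → S1)
    (hfbr : ∀ σ2 ∈ stdSimplex ℝ S2,
      (∀ t1, pay u1 t1 σ2 ≤ pay u1 (fbr σ2) σ2) ∧
      (∀ t1, (∀ r1, pay u1 r1 σ2 ≤ pay u1 t1 σ2) →
        pay u2 t1 σ2 ≤ pay u2 (fbr σ2) σ2))
    (σ1 : S1 → ℝ) (σ2 : S2 → ℝ)
    (hσ1 : σ1 ∈ stdSimplex ℝ S1) (hσ2 : σ2 ∈ stdSimplex ℝ S2)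
    (hNE1 : ∀ τ1 ∈ stdSimplex ℝ S1,
      ∑ s1, τ1 s1 * pay u1 s1 σ2 ≤ ∑ s1, σ1 s1 * pay u1 s1 σ2)
    (hNE2 : ∀ τ2 ∈ stdSimplex ℝ S2,
      ∑ s1, σ1 s1 * pay u2 s1 τ2 ≤ ∑ s1, σ1 s1 * pay u2 s1 σ2) :
    (∀ μ1 ∈ stdSimplex ℝ (Option S1),
      ∑ m1, μ1 m1 * metaU1 u1 c m1 σ2 ≤ ∑ s1, σ1 s1 * pay u1 s1 σ2) ∧
    (∀ (k : ℕ) (ν : Fin k → ℝ) (t : Fin k → (S2 → ℝ)),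
      ν ∈ stdSimplex ℝ (Fin k) → (∀ j, t j ∈ stdSimplex ℝ S2) →
      ∑ j, ν j * ∑ s1, σ1 s1 * pay u2 s1 (t j) ≤ ∑ s1, σ1 s1 * pay u2 s1 σ2) := by
  classical
  set v := ∑ s1, σ1 s1 * pay u1 s1 σ2 with hv
  have hpure : ∀ s1 : S1, pay u1 s1 σ2 ≤ v := by
    intro s1
    have h := hNE1 (fun a => if a = s1 then 1 else 0) ?_
    · simpa using h
    · constructor
      · intro a; dsimp; split <;> norm_num
      · simp
  have hmeta : ∀ m1 : Option S1, metaU1 u1 c m1 σ2 ≤ v := by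
    intro m1
    match m1 with
    | some s1 => exact hpure s1
    | none =>
      have : (Finset.univ.sup' Finset.univ_nonempty fun s1 => pay u1 s1 σ2) ≤ v :=
        Finset.sup'_le _ _ fun s1 _ => hpure s1
      simp only [metaU1]
      linarith
  constructor
  · intro μ1 hμ1
    calc ∑ m1, μ1 m1 * metaU1 u1 c m1 σ2 ≤ ∑ m1, μ1 m1 * v := by
          apply Finset.sum_le_sum
          intro m1 _
          exact mul_le_mul_of_nonneg_left (hmeta m1) (hμ1.1 m1)
      _ = v := by rw [← Finset.sum_mul, hμ1.2, one_mul]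
  · intro k ν t hν ht
    calc ∑ j, ν j * ∑ s1, σ1 s1 * pay u2 s1 (t j)
        ≤ ∑ j : Fin k, ν j * ∑ s1, σ1 s1 * pay u2 s1 σ2 := by
          apply Finset.sum_le_sum
          intro j _
          exact mul_le_mul_of_nonneg_left (hNE2 (t j) (ht j)) (hν.1 j)
      _ = ∑ s1, σ1 s1 * pay u2 s1 σ2 := by rw [← Finset.sum_mul, hν.2, one_mul]
end
end

section
/- In the mixed-strategy simulation game arising from the 2x2 trust game TG (payoffs u(T,C)=(20,20), u(T,D)=(-100,100), u(WO,·)=(0,0)) with simulation cost c satisfying 0 < c, there is no Nash equilibrium in which player 1 plays the simulation action msim with positive probability. Consequently every Nash equilibrium of TG_msim gives both players payoff 0. -/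
open Finset

noncomputable section

/-- Player 1's payoff in TG_msim, as a function of the pure strategy
    (0 = Trust, 1 = WalkOut, 2 = msim) and player 2's realized mixed strategy,
    parameterized by its defection probability δ. Simulation best-responds to the
    revealed mixed strategy at cost `c`. -/
def tgU1 (c : ℝ) (i : Fin 3) (δ : ℝ) : ℝ :=
  if i = 0 then 20 - 120 * δ
  else if i = 1 then 0
  else max (20 - 120 * δ) 0 - c

/-- Player 2's payoff in TG_msim; against simulation, player 1 plays the
    favourable best response (Trust whenever it is a best response, ties broken in
    player 2's favour). -/
def tgU2 (i : Fin 3) (δ : ℝ) : ℝ :=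
  if i = 0 then 20 + 80 * δ
  else if i = 1 then 0
  else if 0 ≤ 20 - 120 * δ then 20 + 80 * δ else 0

/-- Player 1's expected payoff when she mixes with `μ1` and player 2 plays the
    meta-strategy mixing over `k` mixed strategies with defection probabilities
    `d j` and weights `ν j`. -/
def tgF1 (c : ℝ) (μ1 : Fin 3 → ℝ) (k : ℕ) (ν : Fin k → ℝ) (d : Fin k → ℝ) : ℝ :=
  ∑ j, ν j * ∑ i, μ1 i * tgU1 c i (d j)

/-- Player 2's expected payoff in the same situation. -/
def tgF2 (μ1 : Fin 3 → ℝ) (k : ℕ) (ν : Fin k → ℝ) (d : Fin k → ℝ) : ℝ :=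
  ∑ j, ν j * ∑ i, μ1 i * tgU2 i (d j)

/-! Against a fixed mixed strategy of player 1, player 2's payoff as a function of its defection
probability δ is maximised at δ = 1 or at δ = 1/6, the largest δ at which simulation still trusts;
so every δ in the support of an equilibrium meta-strategy does at least as well as both. Against
such a δ, simulating brings nothing over walking out but costs c, and trusting brings nothing
positive, so player 1 earns at most -c·μ(msim). Walking out guarantees 0, hence μ(msim) = 0. Then
player 2 answers any trust with δ = 1, so player 1 does not trust either, and both payoffs are 0. -/

theorem sum_mul_le_of_mem_stdSimplex {𝕜 ι : Type*} [Field 𝕜] [LinearOrder 𝕜]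
    [IsStrictOrderedRing 𝕜] [Fintype ι] {ν b : ι → 𝕜} {B : 𝕜} (hν : ν ∈ stdSimplex 𝕜 ι)
    (hb : ∀ j, 0 < ν j → b j ≤ B) : ∑ j, ν j * b j ≤ B := by
  calc ∑ j, ν j * b j ≤ ∑ j, ν j * B := by
        refine Finset.sum_le_sum fun j _ => ?_
        rcases (hν.1 j).eq_or_lt with hj | hj
        · simp [← hj]
        · exact mul_le_mul_of_nonneg_left (hb j hj) hj.le
    _ = B := by rw [← Finset.sum_mul, hν.2, one_mul]

theorem le_of_le_sum_mul_of_mem_stdSimplex {𝕜 ι : Type*} [Field 𝕜] [LinearOrder 𝕜]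
    [IsStrictOrderedRing 𝕜] [Fintype ι] {ν a : ι → 𝕜} {M : 𝕜} (hν : ν ∈ stdSimplex 𝕜 ι)
    (ha : ∀ j, a j ≤ M) (hM : M ≤ ∑ j, ν j * a j) {j : ι} (hj : 0 < ν j) : M ≤ a j := by
  by_contra! hlt
  have : ∑ i, ν i * a i < ∑ i, ν i * M :=
    Finset.sum_lt_sum (fun i _ => mul_le_mul_of_nonneg_left (ha i) (hν.1 i))
      ⟨j, Finset.mem_univ j, mul_lt_mul_of_pos_left hlt hj⟩
  rw [← Finset.sum_mul, hν.2, one_mul] at this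
  exact this.not_ge hM

def tgMixedU1 (c : ℝ) (μ : Fin 3 → ℝ) (δ : ℝ) : ℝ := ∑ i, μ i * tgU1 c i δ

def tgMixedU2 (μ : Fin 3 → ℝ) (δ : ℝ) : ℝ := ∑ i, μ i * tgU2 i δ

theorem tgMixedU1_eq (c : ℝ) (μ : Fin 3 → ℝ) (δ : ℝ) :
    tgMixedU1 c μ δ = μ 0 * (20 - 120 * δ) + μ 2 * (max (20 - 120 * δ) 0 - c) := by
  simp [tgMixedU1, tgU1, Fin.sum_univ_three]

theorem tgMixedU2_eq (μ : Fin 3 → ℝ) (δ : ℝ) :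
    tgMixedU2 μ δ = μ 0 * (20 + 80 * δ) + μ 2 * (if 0 ≤ 20 - 120 * δ then 20 + 80 * δ else 0) := by
  simp [tgMixedU2, tgU2, Fin.sum_univ_three]

theorem tgF1_eq_sum (c : ℝ) (μ : Fin 3 → ℝ) (k : ℕ) (ν d : Fin k → ℝ) :
    tgF1 c μ k ν d = ∑ j, ν j * tgMixedU1 c μ (d j) := rfl

theorem tgF2_eq_sum (μ : Fin 3 → ℝ) (k : ℕ) (ν d : Fin k → ℝ) :
    tgF2 μ k ν d = ∑ j, ν j * tgMixedU2 μ (d j) := rfl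

theorem tgF1_walkOut (c : ℝ) (k : ℕ) (ν d : Fin k → ℝ) : tgF1 c (Pi.single 1 1) k ν d = 0 := by
  simp [tgF1_eq_sum, tgMixedU1_eq]

theorem tgF2_pure (μ : Fin 3 → ℝ) (δ : ℝ) :
    tgF2 μ 1 (fun _ => 1) (fun _ => δ) = tgMixedU2 μ δ := by
  simp [tgF2_eq_sum]

theorem tgMixedU2_le_max {μ : Fin 3 → ℝ} (hμ0 : 0 ≤ μ 0) (hμ2 : 0 ≤ μ 2) {δ : ℝ}
    (hδ : δ ∈ Set.Icc (0 : ℝ) 1) :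
    tgMixedU2 μ δ ≤ max (tgMixedU2 μ 1) (tgMixedU2 μ (1 / 6)) := by
  obtain ⟨hδ0, hδ1⟩ := hδ
  rw [tgMixedU2_eq, tgMixedU2_eq, tgMixedU2_eq]
  norm_num
  split_ifs <;> [right; left] <;> nlinarith

theorem tgMixedU1_le_of_best_response {c : ℝ} {μ : Fin 3 → ℝ} (hμ0 : 0 ≤ μ 0) {δ : ℝ}
    (h1 : tgMixedU2 μ 1 ≤ tgMixedU2 μ δ)
    (h6 : tgMixedU2 μ (1 / 6) ≤ tgMixedU2 μ δ) : tgMixedU1 c μ δ ≤ -(c * μ 2) := by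
  rw [tgMixedU2_eq, tgMixedU2_eq] at h1 h6
  rw [tgMixedU1_eq]
  norm_num at h1 h6
  rcases le_or_gt δ (1 / 6) with hδ6 | hδ6
  · rw [max_eq_left (by linarith)]
    rw [if_pos (by linarith)] at h1 h6
    nlinarith
  · rw [max_eq_right (by linarith)]
    rw [if_neg (by linarith)] at h1 h6
    nlinarith

theorem tgMixedU1_le_of_best_response_of_eq_zero {c : ℝ} {μ : Fin 3 → ℝ} (hμ2 : μ 2 = 0)
    {δ : ℝ} (h1 : tgMixedU2 μ 1 ≤ tgMixedU2 μ δ) : tgMixedU1 c μ δ ≤ -(100 * μ 0) := by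
  rw [tgMixedU2_eq, tgMixedU2_eq, hμ2] at h1
  rw [tgMixedU1_eq, hμ2]
  linarith

/-- In the mixed-strategy simulation game of the 2x2 trust game, for any positive
    simulation cost, no Nash equilibrium puts positive probability on the
    simulation action, and every Nash equilibrium gives both players payoff 0. -/
theorem tg_msim_no_simulation_equilibrium
    (c : ℝ) (hc : 0 < c)
    (μ1 : Fin 3 → ℝ) (k : ℕ) (ν : Fin k → ℝ) (d : Fin k → ℝ)
    (hμ1 : μ1 ∈ stdSimplex ℝ (Fin 3)) (hν : ν ∈ stdSimplex ℝ (Fin k))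
    (hd : ∀ j, d j ∈ Set.Icc (0 : ℝ) 1)
    (hNE1 : ∀ τ1 ∈ stdSimplex ℝ (Fin 3), tgF1 c τ1 k ν d ≤ tgF1 c μ1 k ν d)
    (hNE2 : ∀ (k' : ℕ) (ν' : Fin k' → ℝ) (d' : Fin k' → ℝ),
      ν' ∈ stdSimplex ℝ (Fin k') → (∀ j, d' j ∈ Set.Icc (0 : ℝ) 1) →
      tgF2 μ1 k' ν' d' ≤ tgF2 μ1 k ν d) :
    μ1 2 = 0 ∧ tgF1 c μ1 k ν d = 0 ∧ tgF2 μ1 k ν d = 0 := by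
  have hμ0 : 0 ≤ μ1 0 := hμ1.1 0
  have hμ2 : 0 ≤ μ1 2 := hμ1.1 2
  have hpure : ∀ δ ∈ Set.Icc (0 : ℝ) 1, tgMixedU2 μ1 δ ≤ tgF2 μ1 k ν d := fun δ hδ =>
    tgF2_pure μ1 δ ▸ hNE2 1 _ _ ⟨fun _ => zero_le_one, by simp⟩ fun _ => hδ
  have hbest : ∀ j, 0 < ν j →
      tgMixedU2 μ1 1 ≤ tgMixedU2 μ1 (d j) ∧ tgMixedU2 μ1 (1 / 6) ≤ tgMixedU2 μ1 (d j) :=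
    fun j hj => max_le_iff.1 <| le_of_le_sum_mul_of_mem_stdSimplex hν
      (fun j => tgMixedU2_le_max hμ0 hμ2 (hd j))
      (max_le (hpure 1 ⟨zero_le_one, le_rfl⟩) (hpure (1 / 6) ⟨by norm_num, by norm_num⟩)) hj
  have hwalkOut : 0 ≤ tgF1 c μ1 k ν d :=
    tgF1_walkOut c k ν d ▸ hNE1 _ (single_mem_stdSimplex ℝ 1)
  have hsim : μ1 2 = 0 := by
    have := sum_mul_le_of_mem_stdSimplex hν fun j hj =>
      tgMixedU1_le_of_best_response (c := c) hμ0 (hbest j hj).1 (hbest j hj).2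
    rw [← tgF1_eq_sum] at this
    nlinarith
  have htrust : μ1 0 = 0 := by
    have := sum_mul_le_of_mem_stdSimplex hν fun j hj =>
      tgMixedU1_le_of_best_response_of_eq_zero (c := c) hsim (hbest j hj).1
    rw [← tgF1_eq_sum] at this
    linarith
  refine ⟨hsim, ?_, ?_⟩ <;>
    simp [tgF1_eq_sum, tgF2_eq_sum, tgMixedU1_eq, tgMixedU2_eq, hsim, htrust]
end
end

section
/- In a generalised coordination game, if there exist two distinct indices k ≠ l with y_k = y_l = max_m y_m (two optimal pure commitments for player 2), then for any simulation cost c with 0 < c < (1/2)·(min_m x_m), the profile where player 2 mixes 50:50 between the pure meta-strategies a2^k and a2^l and player 1 always simulates is a Nash equilibrium of the mixed-strategy simulation game, with player 2's payoff equal to max_m y_m. -/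
open Finset

noncomputable section

variable {n : ℕ}

/-- Diagonal payoff matrix of a generalised coordination game. -/
def cg (v : Fin n → ℝ) (i j : Fin n) : ℝ := if i = j then v i else 0

/-- Player's expected utility of pure strategy `s` against mixed strategy `σ2`. -/
def payC (u : Fin n → Fin n → ℝ) (s : Fin n) (σ2 : Fin n → ℝ) : ℝ :=
  ∑ j, σ2 j * u s j

/-- The pure base strategy `m` of player 2, as a mixed strategy. -/
def pureStrat (m : Fin n) : Fin n → ℝ := fun j => if j = m then 1 else 0

/-- Player 1's payoff of a pure strategy of the simulation game (`some s` a base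
    action, `none` = msim) against player 2's pure base strategy `m`: simulating
    lets player 1 match `m`, receiving `x m - c`. -/
def pv1 (x : Fin n → ℝ) (c : ℝ) (m1 : Option (Fin n)) (m : Fin n) : ℝ :=
  match m1 with
  | some s => if s = m then x m else 0
  | none => x m - c


lemma payC_cg {n : ℕ} (v : Fin n → ℝ) (s : Fin n) (σ : Fin n → ℝ) :
    payC (cg v) s σ = σ s * v s := by
  simp only [payC, cg, mul_ite, mul_zero]
  rw [Finset.sum_ite_eq]
  simp

lemma pureStrat_mem {n : ℕ} (m : Fin n) : pureStrat m ∈ stdSimplex ℝ (Fin n) := by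
  constructor
  · intro j; unfold pureStrat; split <;> norm_num
  · simp [pureStrat]

/-- If player 2 has two distinct optimal pure commitments (y k = y l = max y) and
    0 < c < (1/2)·min x, then "player 2 mixes 50:50 between the pure meta-strategies
    a2^k and a2^l, player 1 always simulates" is a Nash equilibrium of the
    mixed-strategy simulation game, and player 2's payoff equals max y. -/
theorem coordination_two_optimal_commitments_simulation_NE
    (n : ℕ) (x y : Fin n → ℝ) (hx : ∀ m, 0 < x m) (hy : ∀ m, 0 < y m)
    (k l : Fin n) (hkl : k ≠ l) (hk : ∀ m, y m ≤ y k) (hl : y l = y k)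
    (c : ℝ) (hc0 : 0 < c) (hc : ∀ m, c < (1 / 2) * x m)
    (fbr : (Fin n → ℝ) → Fin n)
    (hfbr : ∀ σ2 ∈ stdSimplex ℝ (Fin n),
      (∀ t, payC (cg x) t σ2 ≤ payC (cg x) (fbr σ2) σ2) ∧
      (∀ t, (∀ r, payC (cg x) r σ2 ≤ payC (cg x) t σ2) →
        payC (cg y) t σ2 ≤ payC (cg y) (fbr σ2) σ2)) :
    -- player 1 has no profitable mixed deviation over base actions and msim
    (∀ μ1 ∈ stdSimplex ℝ (Option (Fin n)),
      ∑ m1, μ1 m1 * ((1 / 2) * pv1 x c m1 k + (1 / 2) * pv1 x c m1 l)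
        ≤ (1 / 2) * (x k - c) + (1 / 2) * (x l - c)) ∧
    -- player 2 has no profitable deviation to any finite meta-mixture
    (∀ (k' : ℕ) (ν : Fin k' → ℝ) (t : Fin k' → (Fin n → ℝ)),
      ν ∈ stdSimplex ℝ (Fin k') → (∀ j, t j ∈ stdSimplex ℝ (Fin n)) →
      ∑ j, ν j * payC (cg y) (fbr (t j)) (t j)
        ≤ (1 / 2) * payC (cg y) (fbr (pureStrat k)) (pureStrat k)
          + (1 / 2) * payC (cg y) (fbr (pureStrat l)) (pureStrat l)) ∧
    -- player 2's equilibrium payoff is the maximal diagonal payoff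
    (1 / 2) * payC (cg y) (fbr (pureStrat k)) (pureStrat k)
      + (1 / 2) * payC (cg y) (fbr (pureStrat l)) (pureStrat l) = y k := by
  have hpure : ∀ m : Fin n, fbr (pureStrat m) = m := by
    intro m
    have h := (hfbr _ (pureStrat_mem m)).1 m
    rw [payC_cg, payC_cg] at h
    by_contra hne
    simp [pureStrat, hne] at h
    linarith [hx m]
  have hyval : ∀ m : Fin n, payC (cg y) (fbr (pureStrat m)) (pureStrat m) = y m := by
    intro m
    rw [payC_cg, hpure m]
    simp [pureStrat]
  refine ⟨?_, ?_, ?_⟩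
  · intro μ1 hμ1
    have hRHS : (1:ℝ) ≠ 0 := one_ne_zero
    have hb : ∀ m1 : Option (Fin n),
        (1 / 2) * pv1 x c m1 k + (1 / 2) * pv1 x c m1 l
          ≤ (1 / 2) * (x k - c) + (1 / 2) * (x l - c) := by
      intro m1
      match m1 with
      | none => simp [pv1]
      | some s =>
        simp only [pv1]
        have hck := hc k; have hcl := hc l
        by_cases hsk : s = k
        · have hsl : s ≠ l := by rw [hsk]; exact hkl
          simp [hsk, hkl, hsl]
          linarith
        · by_cases hsl : s = l
          · simp [hsk, hsl, (Ne.symm hkl)]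
            linarith
          · simp [hsk, hsl]
            linarith [hx k, hx l]
    calc ∑ m1, μ1 m1 * ((1 / 2) * pv1 x c m1 k + (1 / 2) * pv1 x c m1 l)
        ≤ ∑ m1 : Option (Fin n), μ1 m1 * ((1 / 2) * (x k - c) + (1 / 2) * (x l - c)) := by
          apply Finset.sum_le_sum
          intro i _
          exact mul_le_mul_of_nonneg_left (hb i) (hμ1.1 i)
      _ = (1 / 2) * (x k - c) + (1 / 2) * (x l - c) := by
          rw [← Finset.sum_mul, hμ1.2, one_mul]
  · intro k' ν t hν ht
    rw [hyval k, hyval l, hl]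
    have hbound : ∀ j, payC (cg y) (fbr (t j)) (t j) ≤ y k := by
      intro j
      rw [payC_cg]
      set s := fbr (t j)
      have h0 : 0 ≤ (t j) s := (ht j).1 s
      have h1 : (t j) s ≤ 1 := by
        calc (t j) s ≤ ∑ i, (t j) i :=
              Finset.single_le_sum (fun i _ => (ht j).1 i) (Finset.mem_univ s)
          _ = 1 := (ht j).2
      calc (t j) s * y s ≤ (t j) s * y k :=
            mul_le_mul_of_nonneg_left (hk s) h0
        _ ≤ 1 * y k := mul_le_mul_of_nonneg_right h1 (le_of_lt (hy k))
        _ = y k := one_mul _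
    calc ∑ j, ν j * payC (cg y) (fbr (t j)) (t j)
        ≤ ∑ j, ν j * y k := Finset.sum_le_sum
          (fun j _ => mul_le_mul_of_nonneg_left (hbound j) (hν.1 j))
      _ = y k := by rw [← Finset.sum_mul, hν.2, one_mul]
      _ = (1 / 2) * y k + (1 / 2) * y k := by ring
  · rw [hyval k, hyval l, hl]; ring
end
end

section
/- Consider the game G' used in the NP-hardness construction, built from a bipartite graph Γ = (A ∪ B, E) and parameter k ≥ 2: both players have action set A ∪ B ∪ {OO}, with payoffs u(OO,OO)=(0,0), u(OO,v)=(1,−1) and u(v,OO)=(−1,1) for v ≠ OO, u(a,b)=(1,1) if (a,b) ∈ E and (0,0) otherwise for a∈A, b∈B, u(a,a)=(−k,k) and u(a,a')=(0,0) for a≠a' in A, u(b,b)=(k,−k) and u(b,b')=(0,0) for b≠b' in B, and u(b,a)=(0,0) for b∈B, a∈A. If A' ⊆ A and B' ⊆ B with |A'| = |B'| = k induce a complete bipartite subgraph of Γ, then the profile where player 1 mixes uniformly over A' and player 2 mixes uniformly over B' is a Nash equilibrium with payoffs (1,1). -/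
open Finset

noncomputable section

/-- Actions of the hardness game: a vertex of A, a vertex of B, or Opt Out. -/
abbrev Act (A B : Type*) := Sum A (Sum B Unit)

variable {A B : Type*} [Fintype A] [Fintype B] [DecidableEq A] [DecidableEq B]

/-- Player 1's payoffs in the hardness game G' built from bipartite graph E and
    parameter k. -/
def hg1 (E : A → B → Bool) (k : ℕ) : Act A B → Act A B → ℝ
  | Sum.inl a, Sum.inl a' => if a = a' then -(k : ℝ) else 0
  | Sum.inl a, Sum.inr (Sum.inl b) => if E a b then 1 else 0
  | Sum.inl _, Sum.inr (Sum.inr _) => -1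
  | Sum.inr (Sum.inl _), Sum.inl _ => 0
  | Sum.inr (Sum.inl b), Sum.inr (Sum.inl b') => if b = b' then (k : ℝ) else 0
  | Sum.inr (Sum.inl _), Sum.inr (Sum.inr _) => -1
  | Sum.inr (Sum.inr _), Sum.inl _ => 1
  | Sum.inr (Sum.inr _), Sum.inr (Sum.inl _) => 1
  | Sum.inr (Sum.inr _), Sum.inr (Sum.inr _) => 0

/-- Player 2's payoffs in the hardness game G'. -/
def hg2 (E : A → B → Bool) (k : ℕ) : Act A B → Act A B → ℝ
  | Sum.inl a, Sum.inl a' => if a = a' then (k : ℝ) else 0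
  | Sum.inl a, Sum.inr (Sum.inl b) => if E a b then 1 else 0
  | Sum.inl _, Sum.inr (Sum.inr _) => 1
  | Sum.inr (Sum.inl _), Sum.inl _ => 0
  | Sum.inr (Sum.inl b), Sum.inr (Sum.inl b') => if b = b' then -(k : ℝ) else 0
  | Sum.inr (Sum.inl _), Sum.inr (Sum.inr _) => 1
  | Sum.inr (Sum.inr _), Sum.inl _ => -1
  | Sum.inr (Sum.inr _), Sum.inr (Sum.inl _) => -1
  | Sum.inr (Sum.inr _), Sum.inr (Sum.inr _) => 0

/-- Expected utility in the hardness game under mixed strategies. -/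
def euH (u : Act A B → Act A B → ℝ) (σ1 σ2 : Act A B → ℝ) : ℝ :=
  ∑ v, ∑ w, σ1 v * σ2 w * u v w

/-- The uniform mixture over a subset A' ⊆ A of size k, as a mixed strategy. -/
def unifA (A B : Type*) [DecidableEq A] (A' : Finset A) (k : ℕ) : Act A B → ℝ
  | Sum.inl a => if a ∈ A' then (1 : ℝ) / k else 0
  | _ => 0

/-- The uniform mixture over a subset B' ⊆ B of size k, as a mixed strategy. -/
def unifB (A B : Type*) [DecidableEq B] (B' : Finset B) (k : ℕ) : Act A B → ℝ
  | Sum.inr (Sum.inl b) => if b ∈ B' then (1 : ℝ) / k else 0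
  | _ => 0

end

/-!
A vertex `a ∈ A'` and a vertex `b ∈ B'` are adjacent, so both players earn `1` in the profile.
Against the uniform mixture over `B'`, no pure action of player 1 earns more than `1`: a vertex of
`A` earns at most one per vertex of `B'`, a vertex `b` of `B` earns `k` only against `b` itself,
and opting out earns `1` against each vertex of `B'`. Symmetrically for player 2, so no pure, hence
no mixed, deviation pays.
-/

theorem sum_mul_le_of_mem_stdSimplex_s13 {ι : Type*} [Fintype ι] {σ f : ι → ℝ} {c : ℝ}
    (hσ : σ ∈ stdSimplex ℝ ι) (hf : ∀ i, f i ≤ c) : ∑ i, σ i * f i ≤ c :=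
  calc ∑ i, σ i * f i ≤ ∑ i, σ i * c :=
        sum_le_sum fun i _ => mul_le_mul_of_nonneg_left (hf i) (hσ.1 i)
    _ = c := by rw [← sum_mul, hσ.2, one_mul]

variable {A B : Type*}

section Fintype

variable [Fintype A] [Fintype B]

theorem euH_eq_sum_row (u : Act A B → Act A B → ℝ) (σ1 σ2 : Act A B → ℝ) :
    euH u σ1 σ2 = ∑ v, σ1 v * ∑ w, σ2 w * u v w := by
  simp only [euH, mul_sum, mul_assoc]

theorem euH_eq_sum_col (u : Act A B → Act A B → ℝ) (σ1 σ2 : Act A B → ℝ) :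
    euH u σ1 σ2 = ∑ w, σ2 w * ∑ v, σ1 v * u v w := by
  rw [euH, sum_comm]
  simp only [mul_sum, mul_left_comm, mul_assoc]

theorem euH_le_of_forall_row_le {u : Act A B → Act A B → ℝ} {τ σ2 : Act A B → ℝ} {c : ℝ}
    (hτ : τ ∈ stdSimplex ℝ (Act A B)) (hu : ∀ v, ∑ w, σ2 w * u v w ≤ c) : euH u τ σ2 ≤ c := by
  rw [euH_eq_sum_row]
  exact sum_mul_le_of_mem_stdSimplex_s13 hτ hu

theorem euH_le_of_forall_col_le {u : Act A B → Act A B → ℝ} {σ1 τ : Act A B → ℝ} {c : ℝ}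
    (hτ : τ ∈ stdSimplex ℝ (Act A B)) (hu : ∀ w, ∑ v, σ1 v * u v w ≤ c) : euH u σ1 τ ≤ c := by
  rw [euH_eq_sum_col]
  exact sum_mul_le_of_mem_stdSimplex_s13 hτ hu

theorem sum_unifA_mul [DecidableEq A] (A' : Finset A) (k : ℕ) (g : Act A B → ℝ) :
    ∑ v, unifA A B A' k v * g v = (k : ℝ)⁻¹ * ∑ a ∈ A', g (Sum.inl a) := by
  simp [Fintype.sum_sum_type, unifA, ite_mul, sum_ite_mem, mul_sum]

theorem sum_unifB_mul [DecidableEq B] (B' : Finset B) (k : ℕ) (g : Act A B → ℝ) :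
    ∑ w, unifB A B B' k w * g w = (k : ℝ)⁻¹ * ∑ b ∈ B', g (Sum.inr (Sum.inl b)) := by
  simp [Fintype.sum_sum_type, unifB, ite_mul, sum_ite_mem, mul_sum]

end Fintype

theorem sum_hg1_le [DecidableEq A] [DecidableEq B] (E : A → B → Bool) {k : ℕ} {B' : Finset B}
    (hB : B'.card = k) (v : Act A B) : ∑ b ∈ B', hg1 E k v (Sum.inr (Sum.inl b)) ≤ k := by
  rcases v with a | b | _
  · calc ∑ b ∈ B', hg1 E k (Sum.inl a) (Sum.inr (Sum.inl b)) ≤ B'.card • (1 : ℝ) :=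
          sum_le_card_nsmul _ _ _ fun b _ => by simp only [hg1]; split <;> norm_num
      _ = k := by simp [hB]
  · simp only [hg1]
    rw [sum_ite_eq]
    split <;> simp
  · simp [hg1, hB]

theorem sum_hg2_le [DecidableEq A] [DecidableEq B] (E : A → B → Bool) {k : ℕ} {A' : Finset A}
    (hA : A'.card = k) (w : Act A B) : ∑ a ∈ A', hg2 E k (Sum.inl a) w ≤ k := by
  rcases w with a | b | _
  · simp only [hg2]
    rw [sum_ite_eq']
    split <;> simp
  · calc ∑ a ∈ A', hg2 E k (Sum.inl a) (Sum.inr (Sum.inl b)) ≤ A'.card • (1 : ℝ) :=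
          sum_le_card_nsmul _ _ _ fun a _ => by simp only [hg2]; split <;> norm_num
      _ = k := by simp [hA]
  · simp [hg2, hA]

section Uniform

variable [Fintype A] [Fintype B]

theorem unifA_mem_stdSimplex [DecidableEq A] {A' : Finset A} {k : ℕ} (hk : k ≠ 0)
    (hA : A'.card = k) : unifA A B A' k ∈ stdSimplex ℝ (Act A B) := by
  refine ⟨fun v => ?_, ?_⟩
  · rcases v with a | _ | _ <;> simp only [unifA] <;> positivity
  · simpa [hA, hk] using sum_unifA_mul (B := B) A' k 1

theorem unifB_mem_stdSimplex [DecidableEq B] {B' : Finset B} {k : ℕ} (hk : k ≠ 0)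
    (hB : B'.card = k) : unifB A B B' k ∈ stdSimplex ℝ (Act A B) := by
  refine ⟨fun v => ?_, ?_⟩
  · rcases v with _ | b | _ <;> simp only [unifB] <;> positivity
  · simpa [hB, hk] using sum_unifB_mul (A := A) B' k 1

variable [DecidableEq A] [DecidableEq B]

theorem sum_unifB_mul_hg1_le_one (E : A → B → Bool) {k : ℕ} {B' : Finset B} (hk : k ≠ 0)
    (hB : B'.card = k) (v : Act A B) : ∑ w, unifB A B B' k w * hg1 E k v w ≤ 1 := by
  rw [sum_unifB_mul]
  calc (k : ℝ)⁻¹ * ∑ b ∈ B', hg1 E k v (Sum.inr (Sum.inl b)) ≤ (k : ℝ)⁻¹ * k :=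
        mul_le_mul_of_nonneg_left (sum_hg1_le E hB v) (by positivity)
    _ = 1 := inv_mul_cancel₀ (by exact_mod_cast hk)

theorem sum_unifA_mul_hg2_le_one (E : A → B → Bool) {k : ℕ} {A' : Finset A} (hk : k ≠ 0)
    (hA : A'.card = k) (w : Act A B) : ∑ v, unifA A B A' k v * hg2 E k v w ≤ 1 := by
  rw [sum_unifA_mul]
  calc (k : ℝ)⁻¹ * ∑ a ∈ A', hg2 E k (Sum.inl a) w ≤ (k : ℝ)⁻¹ * k :=
        mul_le_mul_of_nonneg_left (sum_hg2_le E hA w) (by positivity)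
    _ = 1 := inv_mul_cancel₀ (by exact_mod_cast hk)

theorem euH_unifA_unifB (u : Act A B → Act A B → ℝ) (A' : Finset A) (B' : Finset B) (k : ℕ) :
    euH u (unifA A B A' k) (unifB A B B' k) =
      (k : ℝ)⁻¹ * (k : ℝ)⁻¹ * ∑ a ∈ A', ∑ b ∈ B', u (Sum.inl a) (Sum.inr (Sum.inl b)) := by
  rw [euH_eq_sum_row, sum_unifA_mul]
  simp only [sum_unifB_mul, mul_sum, mul_assoc]

theorem euH_unifA_unifB_eq_one {u : Act A B → Act A B → ℝ} {A' : Finset A} {B' : Finset B}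
    {k : ℕ} (hk : k ≠ 0) (hA : A'.card = k) (hB : B'.card = k)
    (hu : ∀ a ∈ A', ∀ b ∈ B', u (Sum.inl a) (Sum.inr (Sum.inl b)) = 1) :
    euH u (unifA A B A' k) (unifB A B B' k) = 1 := by
  rw [euH_unifA_unifB, sum_congr rfl fun a ha => sum_congr rfl (hu a ha)]
  have hk' : (k : ℝ) ≠ 0 := by exact_mod_cast hk
  simp [hA, hB]
  field_simp

end Uniform

variable [Fintype A] [Fintype B] [DecidableEq A] [DecidableEq B]

/-- If A' ⊆ A and B' ⊆ B of size k induce a complete bipartite subgraph, then the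
    profile of uniform mixtures over A' and B' is a Nash equilibrium of G' with
    payoffs (1, 1). -/
theorem hardness_game_Kkk_equilibrium
    (E : A → B → Bool) (k : ℕ) (hk : 2 ≤ k)
    (A' : Finset A) (B' : Finset B) (hA : A'.card = k) (hB : B'.card = k)
    (hE : ∀ a ∈ A', ∀ b ∈ B', E a b) :
    unifA A B A' k ∈ stdSimplex ℝ (Act A B) ∧
    unifB A B B' k ∈ stdSimplex ℝ (Act A B) ∧
    (∀ τ1 ∈ stdSimplex ℝ (Act A B),
      euH (hg1 E k) τ1 (unifB A B B' k) ≤ euH (hg1 E k) (unifA A B A' k) (unifB A B B' k)) ∧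
    (∀ τ2 ∈ stdSimplex ℝ (Act A B),
      euH (hg2 E k) (unifA A B A' k) τ2 ≤ euH (hg2 E k) (unifA A B A' k) (unifB A B B' k)) ∧
    euH (hg1 E k) (unifA A B A' k) (unifB A B B' k) = 1 ∧
    euH (hg2 E k) (unifA A B A' k) (unifB A B B' k) = 1 := by
  have hk0 : k ≠ 0 := by omega
  have hv1 : euH (hg1 E k) (unifA A B A' k) (unifB A B B' k) = 1 :=
    euH_unifA_unifB_eq_one hk0 hA hB fun a ha b hb => by simp [hg1, hE a ha b hb]
  have hv2 : euH (hg2 E k) (unifA A B A' k) (unifB A B B' k) = 1 :=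
    euH_unifA_unifB_eq_one hk0 hA hB fun a ha b hb => by simp [hg2, hE a ha b hb]
  refine ⟨unifA_mem_stdSimplex hk0 hA, unifB_mem_stdSimplex hk0 hB, fun τ1 hτ1 => ?_,
    fun τ2 hτ2 => ?_, hv1, hv2⟩
  · rw [hv1]
    exact euH_le_of_forall_row_le hτ1 (sum_unifB_mul_hg1_le_one E hk0 hB)
  · rw [hv2]
    exact euH_le_of_forall_col_le hτ2 (sum_unifA_mul_hg2_le_one E hk0 hA)
end

section
/- In the game G' from the NP-hardness construction (defined via bipartite graph Γ and parameter k as above), no Nash equilibrium has player 1 placing positive probability on any vertex b ∈ B, and no Nash equilibrium has player 2 placing positive probability on any vertex a ∈ A. -/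
open Finset

noncomputable section

variable {A B : Type*} [Fintype A] [Fintype B] [DecidableEq A] [DecidableEq B]

section AuxLemmas

variable {A B : Type*} [Fintype A] [Fintype B] [DecidableEq A] [DecidableEq B]

private lemma swap_mem (σ : Act A B → ℝ) (h : σ ∈ stdSimplex ℝ (Act A B))
    (v v' : Act A B) (hne : v ≠ v') :
    (fun x => σ x + ((if x = v then -σ v else 0) + (if x = v' then σ v else 0)))
      ∈ stdSimplex ℝ (Act A B) := by
  constructor
  · intro x
    by_cases hxv : x = v
    · subst hxv
      simp [hne]
    · by_cases hxv' : x = v'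
      · subst hxv'
        simp [hxv]
        have h1 := h.1 v; have h2 := h.1 x; linarith
      · simpa [hxv, hxv'] using h.1 x
  · rw [Finset.sum_add_distrib, Finset.sum_add_distrib,
      Finset.sum_ite_eq' Finset.univ v (fun _ => -σ v),
      Finset.sum_ite_eq' Finset.univ v' (fun _ => σ v)]
    simp [h.2]

private lemma best1 (u : Act A B → Act A B → ℝ) (σ1 σ2 : Act A B → ℝ)
    (h1 : σ1 ∈ stdSimplex ℝ (Act A B))
    (hNE : ∀ τ1 ∈ stdSimplex ℝ (Act A B), euH u τ1 σ2 ≤ euH u σ1 σ2)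
    (v v' : Act A B) (hne : v ≠ v') (hv : 0 < σ1 v) :
    ∑ w, σ2 w * u v' w ≤ ∑ w, σ2 w * u v w := by
  set G : Act A B → ℝ := fun x => ∑ w, σ2 w * u x w with hG
  have hE : ∀ ρ : Act A B → ℝ, euH u ρ σ2 = ∑ x, ρ x * G x := by
    intro ρ
    unfold euH
    refine Finset.sum_congr rfl fun x _ => ?_
    rw [hG, Finset.mul_sum]
    exact Finset.sum_congr rfl fun w _ => by ring
  set τ : Act A B → ℝ :=
    fun x => σ1 x + ((if x = v then -σ1 v else 0) + (if x = v' then σ1 v else 0)) with hτ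
  have hτm : τ ∈ stdSimplex ℝ (Act A B) := swap_mem σ1 h1 v v' hne
  have hkey : euH u τ σ2 = euH u σ1 σ2 + σ1 v * G v' - σ1 v * G v := by
    rw [hE τ, hE σ1]
    have hpt : ∀ x, τ x * G x = σ1 x * G x +
        ((if x = v then -(σ1 v * G v) else 0) + (if x = v' then σ1 v * G v' else 0)) := by
      intro x
      rw [hτ]
      by_cases hxv : x = v
      · subst hxv; simp [hne]; try ring
      · by_cases hxv' : x = v'
        · subst hxv'; simp [hxv]; try ring
        · simp [hxv, hxv']
    rw [Finset.sum_congr rfl (fun x _ => hpt x), Finset.sum_add_distrib,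
      Finset.sum_add_distrib,
      Finset.sum_ite_eq' Finset.univ v (fun _ => -(σ1 v * G v)),
      Finset.sum_ite_eq' Finset.univ v' (fun _ => σ1 v * G v')]
    simp only [Finset.mem_univ, if_true]
    ring
  have hle := hNE τ hτm
  rw [hkey] at hle
  have hfin : σ1 v * G v' ≤ σ1 v * G v := by linarith
  exact le_of_mul_le_mul_left hfin hv

private lemma best2 (u : Act A B → Act A B → ℝ) (σ1 σ2 : Act A B → ℝ)
    (h2 : σ2 ∈ stdSimplex ℝ (Act A B))
    (hNE : ∀ τ2 ∈ stdSimplex ℝ (Act A B), euH u σ1 τ2 ≤ euH u σ1 σ2)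
    (v v' : Act A B) (hne : v ≠ v') (hv : 0 < σ2 v) :
    ∑ x, σ1 x * u x v' ≤ ∑ x, σ1 x * u x v := by
  set H : Act A B → ℝ := fun w => ∑ x, σ1 x * u x w with hH
  have hE : ∀ ρ : Act A B → ℝ, euH u σ1 ρ = ∑ w, ρ w * H w := by
    intro ρ
    unfold euH
    rw [Finset.sum_comm]
    refine Finset.sum_congr rfl fun w _ => ?_
    rw [hH, Finset.mul_sum]
    exact Finset.sum_congr rfl fun x _ => by ring
  set τ : Act A B → ℝ :=
    fun x => σ2 x + ((if x = v then -σ2 v else 0) + (if x = v' then σ2 v else 0)) with hτ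
  have hτm : τ ∈ stdSimplex ℝ (Act A B) := swap_mem σ2 h2 v v' hne
  have hkey : euH u σ1 τ = euH u σ1 σ2 + σ2 v * H v' - σ2 v * H v := by
    rw [hE τ, hE σ2]
    have hpt : ∀ x, τ x * H x = σ2 x * H x +
        ((if x = v then -(σ2 v * H v) else 0) + (if x = v' then σ2 v * H v' else 0)) := by
      intro x
      rw [hτ]
      by_cases hxv : x = v
      · subst hxv; simp [hne]; try ring
      · by_cases hxv' : x = v'
        · subst hxv'; simp [hxv]; try ring
        · simp [hxv, hxv']
    rw [Finset.sum_congr rfl (fun x _ => hpt x), Finset.sum_add_distrib,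
      Finset.sum_add_distrib,
      Finset.sum_ite_eq' Finset.univ v (fun _ => -(σ2 v * H v)),
      Finset.sum_ite_eq' Finset.univ v' (fun _ => σ2 v * H v')]
    simp only [Finset.mem_univ, if_true]
    ring
  have hle := hNE τ hτm
  rw [hkey] at hle
  have hfin : σ2 v * H v' ≤ σ2 v * H v := by linarith
  exact le_of_mul_le_mul_left hfin hv

end AuxLemmas

/-- In the hardness game G', no Nash equilibrium has player 1 placing positive
    probability on a vertex of B, and none has player 2 placing positive probability
    on a vertex of A. -/
theorem hardness_game_no_wrong_side
    (E : A → B → Bool) (k : ℕ) (hk : 2 ≤ k)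
    (σ1 σ2 : Act A B → ℝ)
    (h1 : σ1 ∈ stdSimplex ℝ (Act A B)) (h2 : σ2 ∈ stdSimplex ℝ (Act A B))
    (hNE1 : ∀ τ1 ∈ stdSimplex ℝ (Act A B),
      euH (hg1 E k) τ1 σ2 ≤ euH (hg1 E k) σ1 σ2)
    (hNE2 : ∀ τ2 ∈ stdSimplex ℝ (Act A B),
      euH (hg2 E k) σ1 τ2 ≤ euH (hg2 E k) σ1 σ2) :
    (∀ b : B, σ1 (Sum.inr (Sum.inl b)) = 0) ∧
    (∀ a : A, σ2 (Sum.inl a) = 0) := by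
    classical
  have hsum : ∀ f : Act A B → ℝ, ∑ x, f x =
      (∑ a, f (Sum.inl a)) + ((∑ b, f (Sum.inr (Sum.inl b))) + f (Sum.inr (Sum.inr ()))) := by
    intro f
    rw [Fintype.sum_sum_type, Fintype.sum_sum_type]
    simp
  have hk0 : (0:ℝ) < (k:ℝ) := by positivity
  have hσ1sum : (∑ a, σ1 (Sum.inl a)) + ((∑ b, σ1 (Sum.inr (Sum.inl b))) + σ1 (Sum.inr (Sum.inr ()))) = 1 := by
    rw [← hsum]; exact h1.2
  have hσ2sum : (∑ a, σ2 (Sum.inl a)) + ((∑ b, σ2 (Sum.inr (Sum.inl b))) + σ2 (Sum.inr (Sum.inr ()))) = 1 := by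
    rw [← hsum]; exact h2.2
  constructor
  · intro b
    by_contra hb0
    have hb : 0 < σ1 (Sum.inr (Sum.inl b)) := lt_of_le_of_ne (h1.1 _) (Ne.symm hb0)
    have hG := best1 (hg1 E k) σ1 σ2 h1 hNE1 (Sum.inr (Sum.inl b)) (Sum.inr (Sum.inr ()))
      (by simp) hb
    have hL : ∑ w, σ2 w * hg1 E k (Sum.inr (Sum.inr ())) w =
        (∑ a, σ2 (Sum.inl a)) + ∑ b', σ2 (Sum.inr (Sum.inl b')) := by
      rw [hsum]; simp [hg1]
    have hR : ∑ w, σ2 w * hg1 E k (Sum.inr (Sum.inl b)) w =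
        (k:ℝ) * σ2 (Sum.inr (Sum.inl b)) - σ2 (Sum.inr (Sum.inr ())) := by
      rw [hsum]; simp [hg1, mul_ite, Finset.sum_ite_eq]; ring
    rw [hL, hR] at hG
    have hq : 0 < σ2 (Sum.inr (Sum.inl b)) := by nlinarith
    have hH := best2 (hg2 E k) σ1 σ2 h2 hNE2 (Sum.inr (Sum.inl b)) (Sum.inr (Sum.inr ()))
      (by simp) hq
    have hL2 : ∑ x, σ1 x * hg2 E k x (Sum.inr (Sum.inr ())) =
        (∑ a, σ1 (Sum.inl a)) + ∑ b', σ1 (Sum.inr (Sum.inl b')) := by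
      rw [hsum]; simp [hg2]
    have hR2 : ∑ x, σ1 x * hg2 E k x (Sum.inr (Sum.inl b)) =
        (∑ a, σ1 (Sum.inl a) * (if E a b then 1 else 0))
          - (k:ℝ) * σ1 (Sum.inr (Sum.inl b)) - σ1 (Sum.inr (Sum.inr ())) := by
      rw [hsum]; simp [hg2, mul_ite, Finset.sum_ite_eq']; ring
    rw [hL2, hR2] at hH
    have hS : (∑ a, σ1 (Sum.inl a) * (if E a b then 1 else 0)) ≤ ∑ a, σ1 (Sum.inl a) := by
      refine Finset.sum_le_sum fun a _ => ?_
      split_ifs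
      · simp
      · simpa using h1.1 (Sum.inl a)
    have hPB : σ1 (Sum.inr (Sum.inl b)) ≤ ∑ b', σ1 (Sum.inr (Sum.inl b')) :=
      Finset.single_le_sum (f := fun b' => σ1 (Sum.inr (Sum.inl b'))) (fun b' _ => h1.1 _) (Finset.mem_univ b)
    have hPO : 0 ≤ σ1 (Sum.inr (Sum.inr ())) := h1.1 _
    nlinarith
  · intro a
    by_contra ha0
    have ha : 0 < σ2 (Sum.inl a) := lt_of_le_of_ne (h2.1 _) (Ne.symm ha0)
    have hH := best2 (hg2 E k) σ1 σ2 h2 hNE2 (Sum.inl a) (Sum.inr (Sum.inr ()))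
      (by simp) ha
    have hL : ∑ x, σ1 x * hg2 E k x (Sum.inr (Sum.inr ())) =
        (∑ a', σ1 (Sum.inl a')) + ∑ b', σ1 (Sum.inr (Sum.inl b')) := by
      rw [hsum]; simp [hg2]
    have hR : ∑ x, σ1 x * hg2 E k x (Sum.inl a) =
        (k:ℝ) * σ1 (Sum.inl a) - σ1 (Sum.inr (Sum.inr ())) := by
      rw [hsum]; simp [hg2, mul_ite, Finset.sum_ite_eq']; ring
    rw [hL, hR] at hH
    have hp : 0 < σ1 (Sum.inl a) := by nlinarith
    have hG := best1 (hg1 E k) σ1 σ2 h1 hNE1 (Sum.inl a) (Sum.inr (Sum.inr ()))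
      (by simp) hp
    have hL2 : ∑ w, σ2 w * hg1 E k (Sum.inr (Sum.inr ())) w =
        (∑ a', σ2 (Sum.inl a')) + ∑ b', σ2 (Sum.inr (Sum.inl b')) := by
      rw [hsum]; simp [hg1]
    have hR2 : ∑ w, σ2 w * hg1 E k (Sum.inl a) w =
        (∑ b', σ2 (Sum.inr (Sum.inl b')) * (if E a b' then 1 else 0))
          - (k:ℝ) * σ2 (Sum.inl a) - σ2 (Sum.inr (Sum.inr ())) := by
      rw [hsum]; simp [hg1, mul_ite, Finset.sum_ite_eq]; ring
    rw [hL2, hR2] at hG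
    have hS : (∑ b', σ2 (Sum.inr (Sum.inl b')) * (if E a b' then 1 else 0))
        ≤ ∑ b', σ2 (Sum.inr (Sum.inl b')) := by
      refine Finset.sum_le_sum fun b' _ => ?_
      split_ifs
      · simp
      · simpa using h2.1 (Sum.inr (Sum.inl b'))
    have hPA : σ2 (Sum.inl a) ≤ ∑ a', σ2 (Sum.inl a') :=
      Finset.single_le_sum (f := fun a' => σ2 (Sum.inl a')) (fun a' _ => h2.1 _) (Finset.mem_univ a)
    have hPO : 0 ≤ σ2 (Sum.inr (Sum.inr ())) := h2.1 _
    nlinarith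
end
end

section
/- In the password-guessing game PG(N, x) with N ≥ 3 passwords and stakes x > 0, the profile where player 2 (Bob) chooses the password uniformly at random and player 1 (Alice) does not guess is a Nash equilibrium; moreover, Alice's expected payoff from guessing any fixed password against the uniform password distribution is (1/N)(x+1) − ((N−1)/N)·2(x+1) < 0. -/
open Finset

noncomputable section

/-- Alice's payoff in the password-guessing game PG(N, x): `none` = no guess,
    `some g` = guess g, against password p. -/
def pgU1 (x : ℝ) {N : ℕ} : Option (Fin N) → Fin N → ℝ
  | none, _ => 0
  | some g, p => if g = p then x + 1 else -2 * (x + 1)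

/-- Bob's payoff in PG(N, x). -/
def pgU2 (x : ℝ) {N : ℕ} : Option (Fin N) → Fin N → ℝ
  | none, _ => 0
  | some g, p => if g = p then -x - 1 else 0

/-- Alice's pure strategy of not guessing, as a mixed strategy. -/
def noGuess (N : ℕ) : Option (Fin N) → ℝ := fun m => if m = none then 1 else 0

/-- Bob's uniform distribution over passwords. -/
def unifPwd (N : ℕ) : Fin N → ℝ := fun _ => 1 / N

lemma guess_value (N : ℕ) (hN : 3 ≤ N) (x : ℝ) (g : Fin N) :
    ∑ p, unifPwd N p * pgU1 x (some g) p
      = (1 / N) * (x + 1) - ((N - 1) / N) * (2 * (x + 1)) := by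
  have hN0 : (0:ℝ) < N := by positivity
  have : ∑ p, unifPwd N p * pgU1 x (some g) p
      = ∑ p, (1 / N) * (if g = p then x + 1 else -2 * (x + 1)) := rfl
  rw [this, ← Finset.mul_sum]
  have h1 : (univ.filter (fun p => g = p)).card = 1 := by
    simp [Finset.filter_eq]
  have hcard : ((univ.filter (fun p => ¬ g = p)).card : ℝ) = (N : ℝ) - 1 := by
    have := Finset.card_filter_add_card_filter_not (s := (univ : Finset (Fin N)))
      (p := fun p => g = p)
    rw [h1] at this
    have hN1 : 1 ≤ N := by omega
    rw [Finset.card_univ, Fintype.card_fin] at this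
    have : (univ.filter (fun p => ¬ g = p)).card = N - 1 := by omega
    rw [this]
    push_cast [hN1]
    ring
  rw [Finset.sum_ite, Finset.sum_const, Finset.sum_const, h1]
  simp only [one_smul, nsmul_eq_mul]
  rw [hcard]
  field_simp
  ring

lemma guess_value_neg (N : ℕ) (hN : 3 ≤ N) (x : ℝ) (hx : 0 < x) (g : Fin N) :
    ∑ p, unifPwd N p * pgU1 x (some g) p < 0 := by
  rw [guess_value N hN x g]
  have hN0 : (0:ℝ) < N := by positivity
  have h2 : (2:ℝ) ≤ (N:ℝ) - 1 := by
    have : (3:ℝ) ≤ (N:ℝ) := by exact_mod_cast hN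
    linarith
  rw [sub_neg, div_mul_eq_mul_div, div_mul_eq_mul_div, div_lt_div_iff₀ hN0 hN0]
  nlinarith [mul_pos hN0 (mul_pos (show (0:ℝ) < x + 1 by linarith) (show (0:ℝ) < 2*(N:ℝ) - 3 by linarith))]

/-- In PG(N, x) with N ≥ 3 and x > 0, (no guess, uniform password) is a Nash
    equilibrium, and Alice's expected payoff from any fixed guess against the uniform
    password is (1/N)(x+1) − ((N−1)/N)·2(x+1), which is negative. -/
theorem password_guessing_NE (N : ℕ) (hN : 3 ≤ N) (x : ℝ) (hx : 0 < x) :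
    noGuess N ∈ stdSimplex ℝ (Option (Fin N)) ∧
    unifPwd N ∈ stdSimplex ℝ (Fin N) ∧
    (∀ τ1 ∈ stdSimplex ℝ (Option (Fin N)),
      ∑ m, ∑ p, τ1 m * unifPwd N p * pgU1 x m p ≤
        ∑ m, ∑ p, noGuess N m * unifPwd N p * pgU1 x m p) ∧
    (∀ τ2 ∈ stdSimplex ℝ (Fin N),
      ∑ m, ∑ p, noGuess N m * τ2 p * pgU2 x m p ≤
        ∑ m, ∑ p, noGuess N m * unifPwd N p * pgU2 x m p) ∧
    (∀ g : Fin N,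
      ∑ p, unifPwd N p * pgU1 x (some g) p
        = (1 / N) * (x + 1) - ((N - 1) / N) * (2 * (x + 1)) ∧
      ∑ p, unifPwd N p * pgU1 x (some g) p < 0) := by
  have hN0 : (0:ℝ) < N := by positivity
  refine ⟨⟨fun m => by unfold noGuess; split <;> norm_num, by simp [noGuess]⟩,
    ⟨fun p => by unfold unifPwd; positivity, ?_⟩, ?_, ?_, fun g => ⟨guess_value N hN x g,
      guess_value_neg N hN x hx g⟩⟩
  · simp [unifPwd, Finset.card_univ]
    field_simp
  · intro τ1 hτ1
    have hR : ∑ m, ∑ p, noGuess N m * unifPwd N p * pgU1 x m p = 0 := by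
      apply Finset.sum_eq_zero
      intro m _
      rcases m with _ | g
      · simp [pgU1]
      · simp [noGuess]
    rw [hR]
    apply Finset.sum_nonpos
    intro m _
    have hterm : ∑ p, τ1 m * unifPwd N p * pgU1 x m p
        = τ1 m * ∑ p, unifPwd N p * pgU1 x m p := by
      rw [Finset.mul_sum]; congr 1; ext p; ring
    rw [hterm]
    rcases m with _ | g
    · simp [pgU1]
    · exact mul_nonpos_of_nonneg_of_nonpos (hτ1.1 _) (guess_value_neg N hN x hx g).le
  · intro τ2 _
    have h0 : ∀ (τ : Fin N → ℝ), ∑ m, ∑ p, noGuess N m * τ p * pgU2 x m p = 0 := by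
      intro τ
      apply Finset.sum_eq_zero
      intro m _
      rcases m with _ | g
      · simp [pgU2]
      · simp [noGuess]
    rw [h0, h0]
end
end

section
/- Let G be a (possibly infinite) two-player normal-form game and G' = (S1', S2', u) a subgame such that for each player i, S_i' contains every pure strategy of player i that is a best response to some mixed strategy of the opponent in G. Then the Nash equilibria of G and G' (as sets of mixed strategy profiles supported in S1' × S2') coincide: NE(G) = NE(G'). -/
open Finset

noncomputable section

variable {S1 S2 : Type*} [Fintype S1] [Fintype S2]

/-- Player 1's expected utility of pure strategy `t1` against a mixed strategy `σ2`. -/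
def bpay1 (u : S1 → S2 → ℝ) (t1 : S1) (σ2 : S2 → ℝ) : ℝ :=
  ∑ s2, σ2 s2 * u t1 s2

/-- Player 2's expected utility of pure strategy `t2` against a mixed strategy `σ1`. -/
def bpay2 (u : S1 → S2 → ℝ) (σ1 : S1 → ℝ) (t2 : S2) : ℝ :=
  ∑ s1, σ1 s1 * u s1 t2

/-- Expected utility of a mixed profile. -/
def ee (u : S1 → S2 → ℝ) (σ1 : S1 → ℝ) (σ2 : S2 → ℝ) : ℝ :=
  ∑ s1, ∑ s2, σ1 s1 * σ2 s2 * u s1 s2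

lemma ee_eq1 (u : S1 → S2 → ℝ) (σ1 : S1 → ℝ) (σ2 : S2 → ℝ) :
    ee u σ1 σ2 = ∑ s1, σ1 s1 * bpay1 u s1 σ2 := by
  simp [ee, bpay1, Finset.mul_sum, mul_assoc]

lemma ee_eq2 (u : S1 → S2 → ℝ) (σ1 : S1 → ℝ) (σ2 : S2 → ℝ) :
    ee u σ1 σ2 = ∑ s2, σ2 s2 * bpay2 u σ1 s2 := by
  rw [ee, Finset.sum_comm]
  simp only [bpay2, Finset.mul_sum]
  refine Finset.sum_congr rfl fun s2 _ => Finset.sum_congr rfl fun s1 _ => by ring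

def delta {S : Type*} [DecidableEq S] (t : S) : S → ℝ := fun s => if s = t then 1 else 0

lemma delta_mem {S : Type*} [Fintype S] [DecidableEq S] (t : S) : delta t ∈ stdSimplex ℝ S := by
  constructor
  · intro x; unfold delta; split <;> norm_num
  · simp [delta]

lemma ee_delta1 (u : S1 → S2 → ℝ) [DecidableEq S1] (t : S1) (σ2 : S2 → ℝ) :
    ee u (delta t) σ2 = bpay1 u t σ2 := by
  rw [ee_eq1]; simp [delta]

lemma ee_delta2 (u : S1 → S2 → ℝ) [DecidableEq S2] (σ1 : S1 → ℝ) (t : S2) :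
    ee u σ1 (delta t) = bpay2 u σ1 t := by
  rw [ee_eq2]; simp [delta]


/-- If the restricted strategy sets T1, T2 contain every pure strategy that is a best
    response to some mixed strategy of the opponent, then the Nash equilibria of the
    full game G and of the subgame G' (profiles supported in T1 × T2, deviations
    restricted to strategies supported there) coincide. -/
theorem NE_restriction_to_best_responses
    (u1 u2 : S1 → S2 → ℝ) (T1 : Finset S1) (T2 : Finset S2)
    (h1 : ∀ s1 : S1,
      (∃ σ2 ∈ stdSimplex ℝ S2, ∀ t1, bpay1 u1 t1 σ2 ≤ bpay1 u1 s1 σ2) → s1 ∈ T1)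
    (h2 : ∀ s2 : S2,
      (∃ σ1 ∈ stdSimplex ℝ S1, ∀ t2, bpay2 u2 σ1 t2 ≤ bpay2 u2 σ1 s2) → s2 ∈ T2) :
    {σ : (S1 → ℝ) × (S2 → ℝ) |
      σ.1 ∈ stdSimplex ℝ S1 ∧ σ.2 ∈ stdSimplex ℝ S2 ∧
      (∀ τ1 ∈ stdSimplex ℝ S1, ee u1 τ1 σ.2 ≤ ee u1 σ.1 σ.2) ∧
      (∀ τ2 ∈ stdSimplex ℝ S2, ee u2 σ.1 τ2 ≤ ee u2 σ.1 σ.2)} =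
    {σ : (S1 → ℝ) × (S2 → ℝ) |
      σ.1 ∈ stdSimplex ℝ S1 ∧ σ.2 ∈ stdSimplex ℝ S2 ∧
      (∀ s1, σ.1 s1 ≠ 0 → s1 ∈ T1) ∧ (∀ s2, σ.2 s2 ≠ 0 → s2 ∈ T2) ∧
      (∀ τ1 ∈ stdSimplex ℝ S1, (∀ s1, τ1 s1 ≠ 0 → s1 ∈ T1) →
        ee u1 τ1 σ.2 ≤ ee u1 σ.1 σ.2) ∧
      (∀ τ2 ∈ stdSimplex ℝ S2, (∀ s2, τ2 s2 ≠ 0 → s2 ∈ T2) →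
        ee u2 σ.1 τ2 ≤ ee u2 σ.1 σ.2)} := by
  classical
  ext σ
  obtain ⟨σ1, σ2⟩ := σ
  simp only [Set.mem_setOf_eq]
  constructor
  · rintro ⟨hσ1, hσ2, hN1, hN2⟩
    have hv1 : ∀ t, bpay1 u1 t σ2 ≤ ee u1 σ1 σ2 := fun t => by
      have := hN1 (delta t) (delta_mem t); rwa [ee_delta1] at this
    have hv2 : ∀ t, bpay2 u2 σ1 t ≤ ee u2 σ1 σ2 := fun t => by
      have := hN2 (delta t) (delta_mem t); rwa [ee_delta2] at this
    have hsupp1 : ∀ s, σ1 s ≠ 0 → s ∈ T1 := by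
      intro s hs
      have hzero : ∑ t, σ1 t * (ee u1 σ1 σ2 - bpay1 u1 t σ2) = 0 := by
        simp [mul_sub, Finset.sum_sub_distrib, ← Finset.sum_mul, hσ1.2, ← ee_eq1]
      have heach := (Finset.sum_eq_zero_iff_of_nonneg
        (fun t _ => mul_nonneg (hσ1.1 t) (sub_nonneg.2 (hv1 t)))).1 hzero s (mem_univ s)
      have hEq : bpay1 u1 s σ2 = ee u1 σ1 σ2 := by
        rcases mul_eq_zero.1 heach with h | h
        · exact absurd h hs
        · linarith [sub_eq_zero.1 h]
      exact h1 s ⟨σ2, hσ2, fun t => hEq ▸ hv1 t⟩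
    have hsupp2 : ∀ s, σ2 s ≠ 0 → s ∈ T2 := by
      intro s hs
      have hzero : ∑ t, σ2 t * (ee u2 σ1 σ2 - bpay2 u2 σ1 t) = 0 := by
        simp [mul_sub, Finset.sum_sub_distrib, ← Finset.sum_mul, hσ2.2, ← ee_eq2]
      have heach := (Finset.sum_eq_zero_iff_of_nonneg
        (fun t _ => mul_nonneg (hσ2.1 t) (sub_nonneg.2 (hv2 t)))).1 hzero s (mem_univ s)
      have hEq : bpay2 u2 σ1 s = ee u2 σ1 σ2 := by
        rcases mul_eq_zero.1 heach with h | h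
        · exact absurd h hs
        · linarith [sub_eq_zero.1 h]
      exact h2 s ⟨σ1, hσ1, fun t => hEq ▸ hv2 t⟩
    exact ⟨hσ1, hσ2, hsupp1, hsupp2, fun τ1 hτ1 _ => hN1 τ1 hτ1, fun τ2 hτ2 _ => hN2 τ2 hτ2⟩
  · rintro ⟨hσ1, hσ2, -, -, hN1, hN2⟩
    have hne1 : Nonempty S1 := by
      by_contra h
      rw [not_nonempty_iff] at h
      have := hσ1.2
      simp at this
    have hne2 : Nonempty S2 := by
      by_contra h
      rw [not_nonempty_iff] at h
      have := hσ2.2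
      simp at this
    obtain ⟨t1, -, ht1⟩ := Finset.exists_max_image (univ : Finset S1)
      (fun t => bpay1 u1 t σ2) univ_nonempty
    obtain ⟨t2, -, ht2⟩ := Finset.exists_max_image (univ : Finset S2)
      (fun t => bpay2 u2 σ1 t) univ_nonempty
    have ht1T : t1 ∈ T1 := h1 t1 ⟨σ2, hσ2, fun t => ht1 t (mem_univ t)⟩
    have ht2T : t2 ∈ T2 := h2 t2 ⟨σ1, hσ1, fun t => ht2 t (mem_univ t)⟩
    have hbest1 : bpay1 u1 t1 σ2 ≤ ee u1 σ1 σ2 := by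
      have := hN1 (delta t1) (delta_mem t1) (fun s hs => by
        unfold delta at hs
        by_cases h : s = t1
        · exact h ▸ ht1T
        · simp [h] at hs)
      rwa [ee_delta1] at this
    have hbest2 : bpay2 u2 σ1 t2 ≤ ee u2 σ1 σ2 := by
      have := hN2 (delta t2) (delta_mem t2) (fun s hs => by
        unfold delta at hs
        by_cases h : s = t2
        · exact h ▸ ht2T
        · simp [h] at hs)
      rwa [ee_delta2] at this
    refine ⟨hσ1, hσ2, fun τ1 hτ1 => ?_, fun τ2 hτ2 => ?_⟩
    · calc ee u1 τ1 σ2 = ∑ s, τ1 s * bpay1 u1 s σ2 := ee_eq1 _ _ _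
        _ ≤ ∑ s, τ1 s * bpay1 u1 t1 σ2 :=
            Finset.sum_le_sum fun s _ =>
              mul_le_mul_of_nonneg_left (ht1 s (mem_univ s)) (hτ1.1 s)
        _ = bpay1 u1 t1 σ2 := by rw [← Finset.sum_mul, hτ1.2, one_mul]
        _ ≤ ee u1 σ1 σ2 := hbest1
    · calc ee u2 σ1 τ2 = ∑ s, τ2 s * bpay2 u2 σ1 s := ee_eq2 _ _ _
        _ ≤ ∑ s, τ2 s * bpay2 u2 σ1 t2 :=
            Finset.sum_le_sum fun s _ =>
              mul_le_mul_of_nonneg_left (ht2 s (mem_univ s)) (hτ2.1 s)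
        _ = bpay2 u2 σ1 t2 := by rw [← Finset.sum_mul, hτ2.2, one_mul]
        _ ≤ ee u2 σ1 σ2 := hbest2
end
end
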